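/- arXiv:2405.14001 — 11 statements merged into one kernel-verified Lean document; each statement's English description precedes it below -/
import Mathlib

section
/- For any acyclic NSEM M and any solution (u,v) of M, (u,v) is the unique solution of the actualized refinement M^{(u,v)} that extends the context u. -/
open scoped Classical

/-- A (nondeterministic) structural equation model over exogenous variables `U`
and endogenous variables `V`.  Each variable has a finite nonempty range of
natural-number values, there is a DAG (encoded via a rank function) whose nodes
are the variables, and each endogenous variable `X` has a multi-valued
structural function `f X` that depends only on the values of `X`'s parents. -/
structure NSEM (U V : Type) where
  rangeU : U → Finset ℕ
  rangeV : V → Finset ℕ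
  rangeU_ne : ∀ i, (rangeU i).Nonempty
  rangeV_ne : ∀ x, (rangeV x).Nonempty
  /-- `parent p x` : `p` is a parent of the endogenous variable `x` in the graph `G`. -/
  parent : (U ⊕ V) → V → Prop
  /-- acyclicity of `G`, via a topological rank -/
  rank : V → ℕ
  acyclic : ∀ a b : V, parent (Sum.inr a) b → rank a < rank b
  /-- the multi-valued structural function of each endogenous variable, taking a
  full assignment of values to all variables -/
  f : V → ((U ⊕ V) → ℕ) → Finset ℕ
  /-- `f x` depends only on the parents of `x` -/
  f_parents : ∀ x w w', (∀ p, parent p x → w p = w' p) → f x w = f x w'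

namespace NSEM

variable {U V : Type}

/-- the model is total: structural functions never return the empty set -/
def Total (M : NSEM U V) : Prop := ∀ x w, (M.f x w).Nonempty

/-- structural functions return subsets of the range of their variable
(`f_X : R(Pa_X) → P(R(X))`) -/
def RangeRespecting (M : NSEM U V) : Prop := ∀ x w, M.f x w ⊆ M.rangeV x

/-- a context: an assignment of in-range values to the exogenous variables -/
def ValidContext (M : NSEM U V) (u : U → ℕ) : Prop := ∀ i, u i ∈ M.rangeU i

/-- a state: an assignment of in-range values to the endogenous variables -/
def ValidState (M : NSEM U V) (v : V → ℕ) : Prop := ∀ x, v x ∈ M.rangeV x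

/-- `(u,v)` is a solution of `M`: it is a world (all values in range) and the
value of every endogenous variable lies in its structural function applied to
the values of its parents. -/
def Solution (M : NSEM U V) (u : U → ℕ) (v : V → ℕ) : Prop :=
  M.ValidContext u ∧ M.ValidState v ∧ ∀ x, v x ∈ M.f x (Sum.elim u v)

/-- a deterministic model: every structural function returns a singleton -/
def Deterministic (M : NSEM U V) : Prop := ∀ x w, ∃ a, M.f x w = {a}

/-- `M'` refines `M`: same signature and graph, pointwise smaller structural functions -/
def Refines (M' M : NSEM U V) : Prop :=
  M'.rangeU = M.rangeU ∧ M'.rangeV = M.rangeV ∧ M'.parent = M.parent ∧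
    ∀ x w, M'.f x w ⊆ M.f x w

/-- the actualized refinement `M^{(u,v)}`: each `f X` is unchanged except on the
actual parent assignment (the restriction of `(u,v)` to the parents of `X`),
where it returns the singleton of the actual value `v X`. -/
noncomputable def actualize (M : NSEM U V) (u : U → ℕ) (v : V → ℕ) : NSEM U V where
  rangeU := M.rangeU
  rangeV := M.rangeV
  rangeU_ne := M.rangeU_ne
  rangeV_ne := M.rangeV_ne
  parent := M.parent
  rank := M.rank
  acyclic := M.acyclic
  f := fun x w => if ∀ p, M.parent p x → w p = Sum.elim u v p then {v x} else M.f x w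
  f_parents := by
    intro x w w' h
    have hiff : (∀ p, M.parent p x → w p = Sum.elim u v p) ↔
        (∀ p, M.parent p x → w' p = Sum.elim u v p) := by
      constructor <;> intro hc p hp
      · rw [← h p hp]; exact hc p hp
      · rw [h p hp]; exact hc p hp
    try dsimp only
    by_cases hc : ∀ p, M.parent p x → w p = Sum.elim u v p
    · rw [if_pos hc, if_pos (hiff.mp hc)]
    · rw [if_neg hc, if_neg (fun hc' => hc (hiff.mpr hc')), M.f_parents x w w' h]

/-- the intervened model `M_{Y⃗ ← y⃗}` (for `Y⃗ = Ys`, with `y⃗` given by the values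
of `ys` on `Ys`): the structural function of each `Y ∈ Ys` is replaced by the
constant singleton `{ys Y}`, and all incoming edges to `Ys` are removed. -/
noncomputable def intervene (M : NSEM U V) (Ys : Set V) (ys : V → ℕ) : NSEM U V where
  rangeU := M.rangeU
  rangeV := M.rangeV
  rangeU_ne := M.rangeU_ne
  rangeV_ne := M.rangeV_ne
  parent := fun p x => x ∉ Ys ∧ M.parent p x
  rank := M.rank
  acyclic := fun a b h => M.acyclic a b h.2
  f := fun x w => if x ∈ Ys then {ys x} else M.f x w
  f_parents := by
    intro x w w' h
    by_cases hx : x ∈ Ys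
    · simp [hx]
    · simpa [hx] using M.f_parents x w w' (fun p hp => h p ⟨hx, hp⟩)

/-- `d` is a descendant (in the graph of `M`) of some variable in `Xs`
(reachability is reflexive, so `Xs ⊆ Desc M Xs`). -/
def Desc (M : NSEM U V) (Xs : Set V) (d : V) : Prop :=
  ∃ x ∈ Xs, Relation.ReflTransGen (fun a b => M.parent (Sum.inr a) b) x d

end NSEM

/-- for an acyclic NSEM `M` and a solution `(u,v)` of `M`, `(u,v)` is
the unique solution of the actualized refinement `M^{(u,v)}` extending the context `u`. -/
theorem stmt4 {U V : Type} (M : NSEM U V) (u : U → ℕ) (v : V → ℕ)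
    (h : M.Solution u v) :
    (M.actualize u v).Solution u v ∧
      ∀ v' : V → ℕ, (M.actualize u v).Solution u v' → v' = v := by
  obtain ⟨hu, hv, hf⟩ := h
  constructor
  · refine ⟨hu, hv, fun x => ?_⟩
    simp [NSEM.actualize]
  · intro v' ⟨hu', hv', hf'⟩
    have key : ∀ n, ∀ x, M.rank x = n → v' x = v x := by
      intro n
      induction n using Nat.strong_induction_on with
      | _ n ih =>
      intro x hx
      subst hx
      have hcond : ∀ p, M.parent p x → Sum.elim u v' p = Sum.elim u v p := by
        rintro (i | a) hp
        · rfl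
        · exact ih (M.rank a) (M.acyclic a x hp) a rfl
      have := hf' x
      simp only [NSEM.actualize, if_pos hcond] at this
      simpa using this
    funext x
    exact key (M.rank x) x rfl
end

section
/- Let M be an acyclic total NSEM, let Y⃗←y⃗ be an intervention, and let u be a context. Then for every state v', the following are equivalent: (1) there exists a solution (u,v) of M such that (u,v') is a solution of (M^{(u,v)})_{Y⃗←y⃗}; (2) (u,v') is a solution of M_{Y⃗←y⃗}. -/
open scoped Classical

/-- auxiliary solution of `M` that agrees with `v'` whenever possible -/
noncomputable def sol {U V : Type} (M : NSEM U V) (hT : M.Total) (u : U → ℕ)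
    (v' : V → ℕ) (x : V) : ℕ :=
  let w : (U ⊕ V) → ℕ :=
    Sum.elim u (fun y => if _h : M.rank y < M.rank x then sol M hT u v' y else 0)
  if v' x ∈ M.f x w then v' x else (M.f x w).min' (hT x w)
termination_by M.rank x

lemma sol_spec {U V : Type} (M : NSEM U V) (hT : M.Total) (u : U → ℕ)
    (v' : V → ℕ) (x : V) :
    sol M hT u v' x ∈ M.f x (Sum.elim u (sol M hT u v')) ∧
      (v' x ∈ M.f x (Sum.elim u (sol M hT u v')) → sol M hT u v' x = v' x) := by
  set w : (U ⊕ V) → ℕ :=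
    Sum.elim u (fun y => if _h : M.rank y < M.rank x then sol M hT u v' y else 0) with hw
  have hfe : M.f x w = M.f x (Sum.elim u (sol M hT u v')) := by
    apply M.f_parents
    intro p hp
    cases p with
    | inl i => rfl
    | inr a =>
      have : M.rank a < M.rank x := M.acyclic a x hp
      simp [hw, this]
  have heq : sol M hT u v' x =
      if v' x ∈ M.f x w then v' x else (M.f x w).min' (hT x w) := by
    rw [sol]
  constructor
  · rw [heq]
    split
    · rwa [← hfe]
    · rw [← hfe]; exact Finset.min'_mem _ _
  · intro h
    rw [heq, if_pos (show v' x ∈ M.f x w by rw [hfe]; exact h)]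

/-- for an acyclic total NSEM `M`, an intervention `Y⃗ ← y⃗` and a
context `u`: `(u,v')` is a solution of `(M^{(u,v)})_{Y⃗←y⃗}` for some solution
`(u,v)` of `M` iff `(u,v')` is a solution of `M_{Y⃗←y⃗}`. -/
theorem stmt5 {U V : Type} [Fintype V] (M : NSEM U V)
    (hT : M.Total) (hR : M.RangeRespecting)
    (Ys : Set V) (ys : V → ℕ) (hy : ∀ x ∈ Ys, ys x ∈ M.rangeV x)
    (u : U → ℕ) (v' : V → ℕ) :
    (∃ v : V → ℕ, M.Solution u v ∧ ((M.actualize u v).intervene Ys ys).Solution u v')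
      ↔ (M.intervene Ys ys).Solution u v' := by
  constructor
  · rintro ⟨v, ⟨hu, hv, hsol⟩, hu', hv', hsol'⟩
    refine ⟨hu, hv', fun x => ?_⟩
    have h := hsol' x
    by_cases hx : x ∈ Ys
    · simpa [NSEM.intervene, hx] using h
    · simp only [NSEM.intervene, NSEM.actualize, if_neg hx] at h ⊢
      by_cases hc : ∀ p, M.parent p x → Sum.elim u v' p = Sum.elim u v p
      · rw [if_pos hc] at h
        simp only [Finset.mem_singleton] at h
        rw [h]
        rw [M.f_parents x (Sum.elim u v') (Sum.elim u v) hc]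
        exact hsol x
      · rwa [if_neg hc] at h
  · rintro ⟨hu, hv', hsol'⟩
    refine ⟨sol M hT u v', ⟨hu, ?_, fun x => (sol_spec M hT u v' x).1⟩, hu, hv', fun x => ?_⟩
    · intro x
      exact hR x _ ((sol_spec M hT u v' x).1)
    · have h := hsol' x
      by_cases hx : x ∈ Ys
      · simpa [NSEM.intervene, hx] using h
      · simp only [NSEM.intervene, if_neg hx] at h
        simp only [NSEM.intervene, NSEM.actualize, if_neg hx]
        by_cases hc : ∀ p, M.parent p x → Sum.elim u v' p = Sum.elim u (sol M hT u v') p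
        · rw [if_pos hc]
          have : v' x ∈ M.f x (Sum.elim u (sol M hT u v')) := by
            rwa [← M.f_parents x (Sum.elim u v') _ hc]
          simp [(sol_spec M hT u v' x).2 this]
        · rwa [if_neg hc]
end

section
/- Let M be an acyclic total NSEM. Then M ⊨ [Y⃗←y⃗]φ (i.e., for every solution (u,v) of M and every state v' with (u,v') a solution of (M^{(u,v)})_{Y⃗←y⃗}, v' satisfies φ) if and only if v' ⊨ φ for every solution (u,v') of M_{Y⃗←y⃗}. -/
open scoped Classical

/-- Auxiliary construction: a solution of `M` that copies `v'` whenever the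
parent values agree. Defined by well-founded recursion on rank. -/
noncomputable def NSEM.buildV {U V : Type} (M : NSEM U V) (hT : M.Total) (Ys : Set V)
    (u : U → ℕ) (v' : V → ℕ) : V → ℕ :=
  fun x =>
    let w : (U ⊕ V) → ℕ := fun p =>
      match p with
      | Sum.inl i => u i
      | Sum.inr a => if _ : M.rank a < M.rank x then NSEM.buildV M hT Ys u v' a else 0
    if x ∉ Ys ∧ ∀ p, M.parent p x → Sum.elim u v' p = w p then v' x
    else (M.f x w).min' (hT x w)
termination_by x => M.rank x

lemma NSEM.buildV_spec {U V : Type} (M : NSEM U V) (hT : M.Total) (Ys : Set V)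
    (u : U → ℕ) (v' : V → ℕ) (x : V) :
    (x ∉ Ys ∧ (∀ p, M.parent p x →
        Sum.elim u v' p = Sum.elim u (M.buildV hT Ys u v') p) →
      M.buildV hT Ys u v' x = v' x) ∧
    (¬ (x ∉ Ys ∧ ∀ p, M.parent p x →
        Sum.elim u v' p = Sum.elim u (M.buildV hT Ys u v') p) →
      M.buildV hT Ys u v' x ∈ M.f x (Sum.elim u (M.buildV hT Ys u v'))) := by
  have hunf : M.buildV hT Ys u v' x =
      (let w : (U ⊕ V) → ℕ := fun p =>
        match p with
        | Sum.inl i => u i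
        | Sum.inr a => if _ : M.rank a < M.rank x then M.buildV hT Ys u v' a else 0
      if x ∉ Ys ∧ ∀ p, M.parent p x → Sum.elim u v' p = w p then v' x
      else (M.f x w).min' (hT x w)) := by
    conv_lhs => rw [NSEM.buildV]
  set w : (U ⊕ V) → ℕ := fun p =>
      match p with
      | Sum.inl i => u i
      | Sum.inr a => if _ : M.rank a < M.rank x then M.buildV hT Ys u v' a else 0
    with hwdef
  have hw : ∀ p, M.parent p x → w p = Sum.elim u (M.buildV hT Ys u v') p := by
    intro p hp
    cases p with
    | inl i => rfl
    | inr a =>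
      have hr : M.rank a < M.rank x := M.acyclic a x hp
      simp [hwdef, hr]
  have hfw : M.f x w = M.f x (Sum.elim u (M.buildV hT Ys u v')) := M.f_parents x w _ hw
  have hcond : (∀ p, M.parent p x → Sum.elim u v' p = w p) ↔
      (∀ p, M.parent p x → Sum.elim u v' p = Sum.elim u (M.buildV hT Ys u v') p) := by
    constructor <;> intro h p hp
    · rw [← hw p hp]; exact h p hp
    · rw [hw p hp]; exact h p hp
  constructor
  · rintro ⟨hx, hpar⟩
    exact hunf.trans (if_pos ⟨hx, hcond.mpr hpar⟩)
  · intro hn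
    have h2 : M.buildV hT Ys u v' x = (M.f x w).min' (hT x w) :=
      hunf.trans (if_neg (fun h => hn ⟨h.1, hcond.mp h.2⟩))
    rw [h2, ← hfw]
    exact Finset.min'_mem _ _

/-- `M ⊨ [Y⃗←y⃗]φ` iff `v' ⊨ φ` for every solution `(u,v')` of `M_{Y⃗←y⃗}`. -/
theorem stmt6 {U V : Type} [Fintype V] (M : NSEM U V)
    (hT : M.Total) (hR : M.RangeRespecting)
    (Ys : Set V) (ys : V → ℕ) (hy : ∀ x ∈ Ys, ys x ∈ M.rangeV x)
    (φ : (V → ℕ) → Prop) :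
    (∀ (u : U → ℕ) (v : V → ℕ), M.Solution u v →
        ∀ v' : V → ℕ, ((M.actualize u v).intervene Ys ys).Solution u v' → φ v')
      ↔ (∀ (u : U → ℕ) (v' : V → ℕ), (M.intervene Ys ys).Solution u v' → φ v') := by
  constructor
  · -- forward: use the witness solution buildV
    intro H u v' hsol
    set v := M.buildV hT Ys u v' with hv
    have huC : M.ValidContext u := hsol.1
    have hv'S : M.ValidState v' := hsol.2.1
    have hv'f := hsol.2.2
    -- v is a valid state and solution of M
    have hvsolf : ∀ x, v x ∈ M.f x (Sum.elim u v) := by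
      intro x
      rcases M.buildV_spec hT Ys u v' x with ⟨h1, h2⟩
      by_cases hc : x ∉ Ys ∧ ∀ p, M.parent p x →
          Sum.elim u v' p = Sum.elim u v p
      · have hvx : v x = v' x := h1 hc
        have := hv'f x
        simp only [NSEM.intervene] at this
        rw [if_neg hc.1] at this
        have hfeq : M.f x (Sum.elim u v') = M.f x (Sum.elim u v) :=
          M.f_parents x _ _ (fun p hp => hc.2 p hp)
        rw [hvx, ← hfeq]
        exact this
      · exact h2 hc
    have hvS : M.ValidState v := fun x => hR x _ (hvsolf x)
    have hMsol : M.Solution u v := ⟨huC, hvS, hvsolf⟩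
    -- v' is a solution of the actualized intervened model
    apply H u v hMsol v'
    refine ⟨huC, hv'S, ?_⟩
    intro x
    have := hv'f x
    simp only [NSEM.intervene, NSEM.actualize] at this ⊢
    by_cases hx : x ∈ Ys
    · rwa [if_pos hx] at this ⊢
    · rw [if_neg hx] at this ⊢
      by_cases ha : ∀ p, M.parent p x → Sum.elim u v' p = Sum.elim u v p
      · rw [if_pos ha]
        rcases M.buildV_spec hT Ys u v' x with ⟨h1, _⟩
        have hvx : v x = v' x := h1 ⟨hx, ha⟩
        rw [hvx]
        exact Finset.mem_singleton_self _
      · rw [if_neg ha]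
        exact this
  · -- backward: actualized intervened solutions are intervened solutions
    intro H u v hMsol v' hsol
    apply H u v'
    refine ⟨hsol.1, hsol.2.1, ?_⟩
    intro x
    have := hsol.2.2 x
    simp only [NSEM.intervene, NSEM.actualize] at this ⊢
    by_cases hx : x ∈ Ys
    · rwa [if_pos hx] at this ⊢
    · rw [if_neg hx] at this ⊢
      by_cases ha : ∀ p, M.parent p x → Sum.elim u v' p = Sum.elim u v p
      · rw [if_pos ha] at this
        rw [Finset.mem_singleton] at this
        rw [this]
        have hfeq : M.f x (Sum.elim u v') = M.f x (Sum.elim u v) :=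
          M.f_parents x _ _ ha
        rw [hfeq]
        exact hMsol.2.2 x
      · rwa [if_neg ha] at this
end

section
/- Soundness of strong composition (D3(b)): let M be an acyclic total NSEM, (u,v) a solution of M, and W ∉ X⃗. If every solution (u,v') of (M^{(u,v)})_{X⃗←x⃗} satisfies (W = w ∧ φ), then every solution (u,v'') of (M^{(u,v)})_{X⃗←x⃗, W←w} satisfies φ. -/
open scoped Classical

namespace NSEM

variable {U V : Type}

/-- pick an element of `f x w`, preferring the "desired" value `des x` -/
noncomputable def pick (M : NSEM U V) (des : V → ℕ) (x : V) (w : (U ⊕ V) → ℕ) : ℕ :=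
  if h : (M.f x w).Nonempty then (if des x ∈ M.f x w then des x else (M.f x w).min' h) else 0

lemma pick_mem (M : NSEM U V) (des : V → ℕ) (x : V) (w : (U ⊕ V) → ℕ)
    (h : (M.f x w).Nonempty) : M.pick des x w ∈ M.f x w := by
  unfold pick
  rw [dif_pos h]
  split_ifs with h2
  · exact h2
  · exact Finset.min'_mem _ h

lemma pick_des (M : NSEM U V) {des : V → ℕ} {x : V} {w : (U ⊕ V) → ℕ}
    (h : des x ∈ M.f x w) : M.pick des x w = des x := by
  unfold pick
  rw [dif_pos ⟨_, h⟩, if_pos h]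

/-- approximations of a solution, built in rank order -/
noncomputable def approx (M : NSEM U V) (u : U → ℕ) (des : V → ℕ) : ℕ → V → ℕ
  | 0 => des
  | n + 1 => fun x =>
      if M.rank x < n then M.approx u des n x
      else M.pick des x (Sum.elim u (M.approx u des n))

noncomputable def solve (M : NSEM U V) (u : U → ℕ) (des : V → ℕ) (x : V) : ℕ :=
  M.approx u des (M.rank x + 1) x

lemma approx_stable (M : NSEM U V) (u : U → ℕ) (des : V → ℕ) :
    ∀ n x, M.rank x < n → M.approx u des n x = M.solve u des x := by
  intro n
  induction n with
  | zero => exact fun x h => absurd h (Nat.not_lt_zero _)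
  | succ n ih =>
    intro x hx
    by_cases h2 : M.rank x < n
    · rw [show M.approx u des (n + 1) x = M.approx u des n x from if_pos h2, ih x h2]
    · have he : M.rank x = n := by omega
      rw [solve, he]

lemma solve_eq_pick (M : NSEM U V) (u : U → ℕ) (des : V → ℕ) (x : V) :
    M.solve u des x = M.pick des x (Sum.elim u (M.solve u des)) := by
  have h1 : M.solve u des x = M.pick des x (Sum.elim u (M.approx u des (M.rank x))) := by
    rw [solve]
    exact if_neg (lt_irrefl _)
  have hf : M.f x (Sum.elim u (M.approx u des (M.rank x))) = M.f x (Sum.elim u (M.solve u des)) := by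
    apply M.f_parents
    intro p hp
    cases p with
    | inl i => rfl
    | inr a => exact M.approx_stable u des (M.rank x) a (M.acyclic a x hp)
  rw [h1]
  unfold pick
  rw [hf]

lemma solve_mem (M : NSEM U V) (hT : M.Total) (u : U → ℕ) (des : V → ℕ) (x : V) :
    M.solve u des x ∈ M.f x (Sum.elim u (M.solve u des)) := by
  rw [solve_eq_pick]
  exact M.pick_mem _ _ _ (hT _ _)

lemma solve_des (M : NSEM U V) {u : U → ℕ} {des : V → ℕ} {x : V}
    (h : des x ∈ M.f x (Sum.elim u (M.solve u des))) : M.solve u des x = des x := by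
  rw [solve_eq_pick]
  exact M.pick_des h

end NSEM

/-- soundness of strong composition, D3(b): if every solution of
`(M^{(u,v)})_{X⃗←x⃗}` satisfies `W = w ∧ φ`, then every solution of
`(M^{(u,v)})_{X⃗←x⃗, W←w}` satisfies `φ`. -/
theorem stmt8 {U V : Type} [Fintype V] (M : NSEM U V)
    (hT : M.Total) (hR : M.RangeRespecting)
    (u : U → ℕ) (v : V → ℕ) (h : M.Solution u v)
    (Xs : Set V) (xs : V → ℕ) (W : V) (hW : W ∉ Xs) (w : ℕ)
    (φ : (V → ℕ) → Prop)
    (h1 : ∀ v' : V → ℕ, ((M.actualize u v).intervene Xs xs).Solution u v' →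
            v' W = w ∧ φ v') :
    ∀ v'' : V → ℕ,
      ((M.actualize u v).intervene (Xs ∪ {W}) (Function.update xs W w)).Solution u v'' →
        φ v'' := by
  intro v'' hv''
  set N := M.actualize u v with hN
  set M1 := N.intervene Xs xs with hM1
  set M2 := N.intervene (Xs ∪ {W}) (Function.update xs W w) with hM2
  -- totality of M1
  have hT1 : M1.Total := by
    intro x w'
    by_cases hx : x ∈ Xs
    · rw [show M1.f x w' = {xs x} from if_pos hx]
      exact Finset.singleton_nonempty _
    · rw [show M1.f x w' = N.f x w' from if_neg hx]
      by_cases hc : ∀ p, M.parent p x → w' p = Sum.elim u v p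
      · rw [show N.f x w' = {v x} from if_pos hc]
        exact Finset.singleton_nonempty _
      · rw [show N.f x w' = M.f x w' from if_neg hc]
        exact hT x w'
  -- basic facts about v''
  have hvW : v'' W = w := by
    have := hv''.2.2 W
    rw [show M2.f W (Sum.elim u v'') = {Function.update xs W w W} from
      if_pos (by simp : W ∈ Xs ∪ {W})] at this
    simpa using this
  have hXs : ∀ x ∈ Xs, v'' x = xs x := by
    intro x hx
    have hxW : x ≠ W := fun he => hW (he ▸ hx)
    have := hv''.2.2 x
    rw [show M2.f x (Sum.elim u v'') = {Function.update xs W w x} from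
      if_pos (by simp [hx] : x ∈ Xs ∪ {W})] at this
    simpa [Function.update_of_ne hxW] using this
  -- key: every element of f_{M1} W at v'' equals w
  have key : ∀ a ∈ M1.f W (Sum.elim u v''), a = w := by
    intro a ha
    set des := Function.update v'' W a with hdes
    set v' := M1.solve u des with hv'
    have claim1 : ∀ n x, M.rank x < M.rank W → M.rank x = n → v' x = v'' x := by
      intro n
      induction n using Nat.strong_induction_on with
      | _ n ih =>
        intro x hxW hxn
        have hxne : x ≠ W := fun he => absurd (he ▸ hxW) (lt_irrefl _)
        have hdx : des x = v'' x := Function.update_of_ne hxne _ _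
        have hpar : ∀ p, M.parent p x → Sum.elim u v' p = Sum.elim u v'' p := by
          intro p hp
          cases p with
          | inl i => rfl
          | inr b =>
            have hb := M.acyclic b x hp
            exact ih (M.rank b) (hxn ▸ hb) b (hb.trans hxW) rfl
        by_cases hx : x ∈ Xs
        · have hmem : des x ∈ M1.f x (Sum.elim u v') := by
            rw [show M1.f x (Sum.elim u v') = {xs x} from if_pos hx, hdx, hXs x hx]
            exact Finset.mem_singleton_self _
          rw [show v' x = des x from M1.solve_des hmem, hdx]
        · have hfeq : M1.f x (Sum.elim u v') = M2.f x (Sum.elim u v'') := by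
            rw [show M1.f x (Sum.elim u v') = N.f x (Sum.elim u v') from if_neg hx,
              show M2.f x (Sum.elim u v'') = N.f x (Sum.elim u v'') from
                if_neg (by simp [hx, hxne] : x ∉ Xs ∪ {W})]
            exact N.f_parents x _ _ hpar
          have hmem : des x ∈ M1.f x (Sum.elim u v') := by
            rw [hfeq, hdx]
            exact hv''.2.2 x
          rw [show v' x = des x from M1.solve_des hmem, hdx]
    have claim2 : v' W = a := by
      have hfeq : M1.f W (Sum.elim u v') = M1.f W (Sum.elim u v'') := by
        apply M1.f_parents
        intro p hp
        cases p with
        | inl i => rfl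
        | inr b =>
          have hb := M.acyclic b W hp.2
          exact claim1 (M.rank b) b hb rfl
      have hmem : des W ∈ M1.f W (Sum.elim u v') := by
        rw [hfeq, hdes, Function.update_self]
        exact ha
      rw [show v' W = des W from M1.solve_des hmem, hdes, Function.update_self]
    have hstate : M1.ValidState v' := by
      intro x
      have hm := M1.solve_mem hT1 u des x
      by_cases hx : x ∈ Xs
      · rw [show M1.f x (Sum.elim u v') = {xs x} from if_pos hx, Finset.mem_singleton] at hm
        rw [hv', hm, ← hXs x hx]
        exact hv''.2.1 x
      · rw [show M1.f x (Sum.elim u v') = N.f x (Sum.elim u v') from if_neg hx] at hm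
        by_cases hc : ∀ p, M.parent p x → Sum.elim u v' p = Sum.elim u v p
        · rw [show N.f x (Sum.elim u v') = {v x} from if_pos hc, Finset.mem_singleton] at hm
          rw [hv', hm]
          exact h.2.1 x
        · rw [show N.f x (Sum.elim u v') = M.f x (Sum.elim u v') from if_neg hc] at hm
          exact hR x _ hm
    have hsol : M1.Solution u v' := ⟨hv''.1, hstate, fun x => M1.solve_mem hT1 u des x⟩
    exact claim2.symm.trans (h1 v' hsol).1
  have wmem : w ∈ M1.f W (Sum.elim u v'') := by
    obtain ⟨a, ha⟩ := hT1 W (Sum.elim u v'')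
    exact key a ha ▸ ha
  have hsol'' : M1.Solution u v'' := by
    refine ⟨hv''.1, hv''.2.1, fun x => ?_⟩
    by_cases hx : x ∈ Xs
    · rw [show M1.f x (Sum.elim u v'') = {xs x} from if_pos hx, hXs x hx]
      exact Finset.mem_singleton_self _
    · by_cases hxW : x = W
      · subst hxW
        rw [hvW]
        exact wmem
      · have hfeq : M1.f x (Sum.elim u v'') = M2.f x (Sum.elim u v'') := by
          rw [show M1.f x (Sum.elim u v'') = N.f x (Sum.elim u v'') from if_neg hx,
            show M2.f x (Sum.elim u v'') = N.f x (Sum.elim u v'') from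
              if_neg (by simp [hx, hxW] : x ∉ Xs ∪ {W})]
        rw [hfeq]
        exact hv''.2.2 x
  exact (h1 v'' hsol'').2
end

section
/- Soundness of reversibility (D5): let M be an acyclic total NSEM with endogenous variables V = X⃗ ∪ {W, Y} ∪ Z⃗ (disjoint), and (u,v₀) a solution of M. If there exists a solution of (M^{(u,v₀)})_{X⃗←x⃗, Y←y} whose restriction to (W, Z⃗) is (w, z⃗), and there exists a solution of (M^{(u,v₀)})_{X⃗←x⃗, W←w} whose restriction to (Y, Z⃗) is (y, z⃗), then there exists a solution of (M^{(u,v₀)})_{X⃗←x⃗} whose restriction to (W, Y, Z⃗) is (w, y, z⃗). -/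
open scoped Classical

/-- soundness of reversibility, D5: with endogenous variables
`V = X⃗ ∪ {W,Y} ∪ Z⃗` (disjoint), if `(M^{(u,v₀)})_{X⃗←x⃗, Y←y}` has a solution whose
restriction to `(W,Z⃗)` is `(w,z⃗)` and `(M^{(u,v₀)})_{X⃗←x⃗, W←w}` has a solution
whose restriction to `(Y,Z⃗)` is `(y,z⃗)`, then `(M^{(u,v₀)})_{X⃗←x⃗}` has a solution
whose restriction to `(W,Y,Z⃗)` is `(w,y,z⃗)`. -/
theorem stmt10 {U V : Type} (M : NSEM U V)
    (hT : M.Total) (hR : M.RangeRespecting)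
    (u : U → ℕ) (v₀ : V → ℕ) (h : M.Solution u v₀)
    (Xs : Set V) (xs : V → ℕ) (W Y : V) (hWY : W ≠ Y) (hW : W ∉ Xs) (hY : Y ∉ Xs)
    (w y : ℕ) (zv : V → ℕ)
    (h1 : ∃ v1 : V → ℕ,
      ((M.actualize u v₀).intervene (Xs ∪ {Y}) (Function.update xs Y y)).Solution u v1 ∧
      v1 W = w ∧ ∀ z, z ∉ Xs → z ≠ W → z ≠ Y → v1 z = zv z)
    (h2 : ∃ v2 : V → ℕ,
      ((M.actualize u v₀).intervene (Xs ∪ {W}) (Function.update xs W w)).Solution u v2 ∧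
      v2 Y = y ∧ ∀ z, z ∉ Xs → z ≠ W → z ≠ Y → v2 z = zv z) :
    ∃ v3 : V → ℕ, ((M.actualize u v₀).intervene Xs xs).Solution u v3 ∧
      v3 W = w ∧ v3 Y = y ∧ ∀ z, z ∉ Xs → z ≠ W → z ≠ Y → v3 z = zv z := by
  obtain ⟨v1, ⟨hC1, hS1, hF1⟩, hW1, hZ1⟩ := h1
  obtain ⟨v2, ⟨hC2, hS2, hF2⟩, hY2, hZ2⟩ := h2
  have hv1Y : v1 Y = y := by
    have := hF1 Y
    simp [NSEM.intervene, Set.mem_union] at this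
    exact this
  have hv2W : v2 W = w := by
    have := hF2 W
    simp [NSEM.intervene, Set.mem_union] at this
    exact this
  have hv1Xs : ∀ x ∈ Xs, v1 x = xs x := by
    intro x hx
    have hxY : x ≠ Y := fun e => hY (e ▸ hx)
    have := hF1 x
    simp [NSEM.intervene, Set.mem_union, hx, Function.update_of_ne hxY] at this
    exact this
  have hv2Xs : ∀ x ∈ Xs, v2 x = xs x := by
    intro x hx
    have hxW : x ≠ W := fun e => hW (e ▸ hx)
    have := hF2 x
    simp [NSEM.intervene, Set.mem_union, hx, Function.update_of_ne hxW] at this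
    exact this
  have heq : v1 = v2 := by
    funext x
    by_cases hx : x ∈ Xs
    · rw [hv1Xs x hx, hv2Xs x hx]
    · by_cases hxW : x = W
      · subst hxW; rw [hW1, hv2W]
      · by_cases hxY : x = Y
        · subst hxY; rw [hv1Y, hY2]
        · rw [hZ1 x hx hxW hxY, hZ2 x hx hxW hxY]
  refine ⟨v1, ⟨hC1, hS1, ?_⟩, hW1, hv1Y, hZ1⟩
  intro x
  by_cases hx : x ∈ Xs
  · simp [NSEM.intervene, hx, hv1Xs x hx]
  · by_cases hxY : x = Y
    · subst hxY
      have := hF2 x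
      have hmem : x ∉ Xs ∪ ({W} : Set V) := by
        simp [hx, Ne.symm hWY]
      simp only [NSEM.intervene, hmem, if_neg hmem] at this
      simp only [NSEM.intervene, if_neg hx]
      rw [heq]
      exact this
    · have := hF1 x
      have hmem : x ∉ Xs ∪ ({Y} : Set V) := by simp [hx, hxY]
      simp only [NSEM.intervene, if_neg hmem] at this
      simp only [NSEM.intervene, if_neg hx]
      exact this
end

section
/- Conjunction conditionalization: for any acyclic total NSEM M and solution (u,v) of M, if v satisfies X⃗ = x⃗ and v satisfies φ, then every state v' such that (u,v') is a solution of (M^{(u,v)})_{X⃗←x⃗} satisfies φ. In particular, (u,v) itself is the unique such solution extending u. -/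
open scoped Classical

/-- conjunction conditionalization: if the actual world satisfies
`X⃗ = x⃗ ∧ φ`, then every solution of `(M^{(u,v)})_{X⃗←x⃗}` satisfies `φ`; in
particular `(u,v)` itself is the unique such solution extending `u`. -/
theorem stmt11 {U V : Type} (M : NSEM U V)
    (hT : M.Total) (hR : M.RangeRespecting)
    (u : U → ℕ) (v : V → ℕ) (h : M.Solution u v)
    (Xs : Set V) (xs : V → ℕ) (hx : ∀ X ∈ Xs, v X = xs X)
    (φ : (V → ℕ) → Prop) (hφ : φ v) :
    (∀ v' : V → ℕ, ((M.actualize u v).intervene Xs xs).Solution u v' → φ v') ∧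
    ((M.actualize u v).intervene Xs xs).Solution u v ∧
    (∀ v' : V → ℕ, ((M.actualize u v).intervene Xs xs).Solution u v' → v' = v) := by
  have key : ∀ v' : V → ℕ, ((M.actualize u v).intervene Xs xs).Solution u v' → v' = v := by
    intro v' hs
    obtain ⟨_, _, hsol⟩ := hs
    have main : ∀ n x, M.rank x = n → v' x = v x := by
      intro n
      induction n using Nat.strong_induction_on with
      | _ n ih =>
        intro x hn
        have hthis := hsol x
        simp only [NSEM.intervene, NSEM.actualize] at hthis
        by_cases hXs : x ∈ Xs
        · rw [if_pos hXs] at hthis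
          simp at hthis
          rw [hthis, ← hx x hXs]
        · rw [if_neg hXs] at hthis
          have hpar : ∀ p, M.parent p x → Sum.elim u v' p = Sum.elim u v p := by
            intro p hp
            cases p with
            | inl i => rfl
            | inr y => simpa using ih (M.rank y) (hn ▸ M.acyclic y x hp) y rfl
          rw [if_pos hpar] at hthis
          simpa using hthis
    exact funext fun x => main (M.rank x) x rfl
  have hsv : ((M.actualize u v).intervene Xs xs).Solution u v := by
    refine ⟨h.1, h.2.1, fun x => ?_⟩
    simp only [NSEM.intervene, NSEM.actualize]
    by_cases hXs : x ∈ Xs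
    · rw [if_pos hXs]; simp [hx x hXs]
    · rw [if_neg hXs, if_pos (fun p _ => trivial : ∀ p, M.parent p x → True)]
      simp
  exact ⟨fun v' hs => (key v' hs) ▸ hφ, hsv, key⟩
end

section
/- Non-descendant invariance: let M be an acyclic total NSEM, (u,v) a solution of M, and let Y be an endogenous variable that is not a descendant in G of any variable in X⃗. If v(Y) = y then every state v' with (u,v') a solution of (M^{(u,v)})_{X⃗←x⃗} also satisfies v'(Y) = y. -/
open scoped Classical

/-- non-descendant invariance: if `Y` is not a descendant (in the
graph of `M`) of any variable in `X⃗`, and `v Y = y` in the actual solution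
`(u,v)`, then every solution of `(M^{(u,v)})_{X⃗←x⃗}` also assigns `y` to `Y`. -/
theorem stmt12 {U V : Type} (M : NSEM U V)
    (hT : M.Total) (hR : M.RangeRespecting)
    (u : U → ℕ) (v : V → ℕ) (h : M.Solution u v)
    (Xs : Set V) (xs : V → ℕ) (Y : V) (hY : ¬ M.Desc Xs Y) (y : ℕ) (hy : v Y = y) :
    ∀ v' : V → ℕ, ((M.actualize u v).intervene Xs xs).Solution u v' → v' Y = y := by
  intro v' hs
  obtain ⟨-, -, hsol⟩ := hs
  suffices H : ∀ n, ∀ Z : V, M.rank Z = n → ¬ M.Desc Xs Z → v' Z = v Z by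
    rw [← hy]; exact H _ Y rfl hY
  intro n
  induction n using Nat.strong_induction_on with
  | _ n ih =>
    intro Z hn hZ
    have hZX : Z ∉ Xs := fun h' => hZ ⟨Z, h', Relation.ReflTransGen.refl⟩
    have hps : ∀ p, M.parent p Z → Sum.elim u v' p = Sum.elim u v p := by
      intro p hp
      cases p with
      | inl i => rfl
      | inr a =>
        have ha : ¬ M.Desc Xs a := by
          rintro ⟨x, hx, hpath⟩; exact hZ ⟨x, hx, hpath.tail hp⟩
        exact ih (M.rank a) (hn ▸ M.acyclic a Z hp) a rfl ha
    have hmem := hsol Z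
    simp only [NSEM.intervene, NSEM.actualize] at hmem
    rw [if_neg hZX, if_pos hps] at hmem
    simpa using hmem
end

section
/- Soundness of D10(c) for counterfactual logic: for any acyclic total NSEM M and solution (u,v) of M, if some state v' with (u,v') a solution of the actualized refinement M^{(u,v)} satisfies φ, then every such state satisfies φ (since (u,v) is the unique solution of M^{(u,v)} extending u). -/
open scoped Classical

/-- soundness of D10(c) for the counterfactual logic: if some
solution of the actualized refinement `M^{(u,v)}` extending `u` satisfies `φ`,
then every such solution satisfies `φ` (since `(u,v)` is the unique one). -/
theorem stmt14 {U V : Type} (M : NSEM U V)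
    (hT : M.Total) (hR : M.RangeRespecting)
    (u : U → ℕ) (v : V → ℕ) (h : M.Solution u v)
    (φ : (V → ℕ) → Prop)
    (hex : ∃ v' : V → ℕ, (M.actualize u v).Solution u v' ∧ φ v') :
    ∀ v' : V → ℕ, (M.actualize u v).Solution u v' → φ v' := by
  have key : ∀ v' : V → ℕ, (M.actualize u v).Solution u v' → v' = v := by
    intro v' hs
    have key2 : ∀ n x, M.rank x = n → v' x = v x := by
      intro n
      induction n using Nat.strong_induction_on with
      | _ n ih =>
      intro x hn
      have hx := hs.2.2 x
      have hcond : ∀ p, M.parent p x → Sum.elim u v' p = Sum.elim u v p := by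
        intro p hp
        cases p with
        | inl i => rfl
        | inr a => exact ih (M.rank a) (hn ▸ M.acyclic a x hp) a rfl
      simp only [NSEM.actualize, if_pos hcond] at hx
      simpa using hx
    exact funext fun x => key2 (M.rank x) x rfl
  obtain ⟨v0, hs0, hφ⟩ := hex
  intro v' hs'
  rw [key v' hs', ← key v0 hs0]
  exact hφ
end

section
/- Failure of D10(c) for interventionist semantics: there is an acyclic total NSEM M with a single binary endogenous variable X and equation f_X(∅) = {0,1} such that both (M,∅) ⊨ ⟨⟩(X=1) and (M,∅) ⊨ ⟨⟩(X=0), hence (M,∅) ⊭ [](X=1). -/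
open scoped Classical

/-- failure of D10(c) for the interventionist semantics: there is an
acyclic total NSEM with a single binary endogenous variable `X` and `f_X = {0,1}`
such that `(M,∅) ⊨ ⟨⟩(X=1)` and `(M,∅) ⊨ ⟨⟩(X=0)`, hence `(M,∅) ⊭ [](X=1)`. -/
theorem stmt15 :
    ∃ M : NSEM Empty Unit,
      M.Total ∧ M.RangeRespecting ∧ (∀ x, M.rangeV x = {0, 1}) ∧
      (∀ x w, M.f x w = {0, 1}) ∧
      (∃ v : Unit → ℕ, M.Solution (fun e => e.elim) v ∧ v () = 1) ∧
      (∃ v : Unit → ℕ, M.Solution (fun e => e.elim) v ∧ v () = 0) ∧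
      ¬ (∀ v : Unit → ℕ, M.Solution (fun e => e.elim) v → v () = 1) := by
  refine ⟨{ rangeU := fun e => e.elim
            rangeV := fun _ => {0,1}
            rangeU_ne := fun e => e.elim
            rangeV_ne := fun _ => ⟨0, by simp⟩
            parent := fun _ _ => False
            rank := fun _ => 0
            acyclic := fun _ _ h => h.elim
            f := fun _ _ => {0,1}
            f_parents := fun _ _ _ _ => rfl }, ?_, ?_, ?_, ?_, ?_, ?_, ?_⟩
  · intro x w; exact ⟨0, by simp⟩
  · intro x w; exact fun a ha => ha
  · intro x; rfl
  · intro x w; rfl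
  · exact ⟨fun _ => 1, ⟨fun i => i.elim, fun _ => by simp, fun _ => by simp⟩, rfl⟩
  · exact ⟨fun _ => 0, ⟨fun i => i.elim, fun _ => by simp, fun _ => by simp⟩, rfl⟩
  · intro h
    have := h (fun _ => 0) ⟨fun i => i.elim, fun _ => by simp, fun _ => by simp⟩
    simp at this
end

section
/- Equivalence of probabilistic and non-probabilistic counterfactual semantics: given consistent models M (probabilistic NSEM) and M* (NSEM) over the same acyclic signature, and a solution (u,v), for every basic causal formula [Y⃗←y⃗]φ: P_{M'}(φ) = 1 where M' = (M^{(u,v)})_{Y⃗←y⃗} if and only if every state v' with (u,v') a solution of ((M*)^{(u,v)})_{Y⃗←y⃗} satisfies φ. -/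
open scoped Classical

/-- A probabilistic NSEM: each endogenous variable `X` has a family of
conditional distributions `PV X` over its range given the values of its parents,
and each exogenous variable has a prior `PU`. -/
structure PNSEM (U V : Type) where
  rangeU : U → Finset ℕ
  rangeV : V → Finset ℕ
  rangeU_ne : ∀ i, (rangeU i).Nonempty
  rangeV_ne : ∀ x, (rangeV x).Nonempty
  parent : (U ⊕ V) → V → Prop
  rank : V → ℕ
  acyclic : ∀ a b : V, parent (Sum.inr a) b → rank a < rank b
  PU : U → ℕ → ℝ
  PV : V → ((U ⊕ V) → ℕ) → ℕ → ℝ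
  PU_nonneg : ∀ i a, 0 ≤ PU i a
  PV_nonneg : ∀ x w a, 0 ≤ PV x w a
  PV_parents : ∀ x w w', (∀ p, parent p x → w p = w' p) → PV x w = PV x w'

namespace PNSEM

variable {U V : Type}

/-- the distributions are proper probability distributions on the ranges, with
strictly positive exogenous priors -/
def Proper (M : PNSEM U V) : Prop :=
  (∀ i a, 0 < M.PU i a ↔ a ∈ M.rangeU i) ∧
  (∀ i, ∑ a ∈ M.rangeU i, M.PU i a = 1) ∧
  (∀ x w a, 0 < M.PV x w a → a ∈ M.rangeV x) ∧
  (∀ x w, ∑ a ∈ M.rangeV x, M.PV x w a = 1)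

/-- the joint distribution, per the Causal Markov factorization
`P_M(U,V) = ∏_X P_X(X | Pa_X)` -/
noncomputable def joint [Fintype U] [Fintype V] (M : PNSEM U V)
    (u : U → ℕ) (v : V → ℕ) : ℝ :=
  (∏ i, M.PU i (u i)) * ∏ x, M.PV x (Sum.elim u v) (v x)

/-- a solution of a probabilistic NSEM: a world with positive probability -/
def PSolution [Fintype U] [Fintype V] (M : PNSEM U V) (u : U → ℕ) (v : V → ℕ) : Prop :=
  (∀ i, u i ∈ M.rangeU i) ∧ (∀ x, v x ∈ M.rangeV x) ∧ 0 < M.joint u v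

end PNSEM

namespace PNSEM

variable {U V : Type}

/-- consistency of a probabilistic NSEM with an NSEM: same signature and graph,
and `P_X(x | pa_X) > 0` iff `x ∈ f_X(pa_X)`. -/
def Consistent (M₁ : PNSEM U V) (M₂ : NSEM U V) : Prop :=
  M₁.rangeU = M₂.rangeU ∧ M₁.rangeV = M₂.rangeV ∧ M₁.parent = M₂.parent ∧
    ∀ x w a, 0 < M₁.PV x w a ↔ a ∈ M₂.f x w

/-- the probabilistic actualized refinement `M^{(u,v)}`: every variable's
distribution puts mass `1` on its actual value at the actual parent assignment,
and is unchanged elsewhere. -/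
noncomputable def actualize (M : PNSEM U V) (u : U → ℕ) (v : V → ℕ) : PNSEM U V where
  rangeU := M.rangeU
  rangeV := M.rangeV
  rangeU_ne := M.rangeU_ne
  rangeV_ne := M.rangeV_ne
  parent := M.parent
  rank := M.rank
  acyclic := M.acyclic
  PU := fun i a => if a = u i then 1 else 0
  PV := fun x w a =>
    if ∀ p, M.parent p x → w p = Sum.elim u v p then (if a = v x then 1 else 0)
    else M.PV x w a
  PU_nonneg := by intro i a; (try dsimp only); split <;> norm_num
  PV_nonneg := by
    intro x w a; try dsimp only
    split
    · split <;> norm_num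
    · exact M.PV_nonneg x w a
  PV_parents := by
    intro x w w' h
    have hiff : (∀ p, M.parent p x → w p = Sum.elim u v p) ↔
        (∀ p, M.parent p x → w' p = Sum.elim u v p) := by
      constructor <;> intro hc p hp
      · rw [← h p hp]; exact hc p hp
      · rw [h p hp]; exact hc p hp
    funext a
    try dsimp only
    by_cases hc : ∀ p, M.parent p x → w p = Sum.elim u v p
    · rw [if_pos hc, if_pos (hiff.mp hc)]
    · rw [if_neg hc, if_neg (fun hc' => hc (hiff.mpr hc')), M.PV_parents x w w' h]

/-- the probabilistic intervention `M_{Y⃗←y⃗}`: the distribution of each `Y ∈ Ys` is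
replaced by the point mass at `ys Y`, and incoming edges to `Ys` are removed. -/
noncomputable def intervene (M : PNSEM U V) (Ys : Set V) (ys : V → ℕ) : PNSEM U V where
  rangeU := M.rangeU
  rangeV := M.rangeV
  rangeU_ne := M.rangeU_ne
  rangeV_ne := M.rangeV_ne
  parent := fun p x => x ∉ Ys ∧ M.parent p x
  rank := M.rank
  acyclic := fun a b h => M.acyclic a b h.2
  PU := M.PU
  PV := fun x w a => if x ∈ Ys then (if a = ys x then 1 else 0) else M.PV x w a
  PU_nonneg := M.PU_nonneg
  PV_nonneg := by
    intro x w a; try dsimp only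
    split
    · split <;> norm_num
    · exact M.PV_nonneg x w a
  PV_parents := by
    intro x w w' h
    by_cases hx : x ∈ Ys
    · simp [hx]
    · simpa [hx] using M.PV_parents x w w' (fun p hp => h p ⟨hx, hp⟩)

/-- the probability of a formula `φ` on states, under the joint distribution -/
noncomputable def prob [Fintype U] [Fintype V] [DecidableEq U] [DecidableEq V]
    (M : PNSEM U V) (φ : (V → ℕ) → Prop) : ℝ :=
  ∑ u ∈ Fintype.piFinset (fun i => M.rangeU i),
    ∑ v ∈ Fintype.piFinset (fun x => M.rangeV x),
      if φ v then M.joint u v else 0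

end PNSEM

private lemma prod_pos_iff_forall {ι : Type*} (s : Finset ι) (f : ι → ℝ)
    (h : ∀ i ∈ s, 0 ≤ f i) : 0 < ∏ i ∈ s, f i ↔ ∀ i ∈ s, 0 < f i := by
  constructor
  · intro hp i hi
    rcases (h i hi).lt_or_eq with h' | h'
    · exact h'
    · exfalso
      rw [Finset.prod_eq_zero hi h'.symm] at hp
      exact lt_irrefl 0 hp
  · exact fun h' => Finset.prod_pos h'

private lemma mul_pos_iff' {a b : ℝ} (ha : 0 ≤ a) (hb : 0 ≤ b) :
    0 < a * b ↔ 0 < a ∧ 0 < b := by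
  constructor
  · intro hp
    rcases ha.lt_or_eq with ha' | ha'
    · rcases hb.lt_or_eq with hb' | hb'
      · exact ⟨ha', hb'⟩
      · exfalso; rw [← hb', mul_zero] at hp; exact lt_irrefl 0 hp
    · exfalso; rw [← ha', zero_mul] at hp; exact lt_irrefl 0 hp
  · exact fun ⟨h1, h2⟩ => mul_pos h1 h2

/-- normalization: the sum over all states of the Markov factorization equals 1,
by induction along a topological order. -/
private lemma pnsem_sum_prod_eq_one {U V : Type} [Fintype U] [Fintype V] [DecidableEq V]
    (M : PNSEM U V)
    (hPV : ∀ x w, ∑ a ∈ M.rangeV x, M.PV x w a = 1)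
    (u : U → ℕ) (T : Finset V) (base : V → ℕ) :
    ∑ v ∈ Fintype.piFinset (fun x => if x ∈ T then M.rangeV x else {base x}),
      ∏ x ∈ T, M.PV x (Sum.elim u v) (v x) = 1 := by
  induction T using Finset.strongInduction generalizing base with
  | _ T ih =>
  rcases T.eq_empty_or_nonempty with rfl | hT
  · have hgrid : Fintype.piFinset
        (fun x : V => if x ∈ (∅ : Finset V) then M.rangeV x else {base x}) = {base} := by
      ext g
      simp [Fintype.mem_piFinset, funext_iff]
    rw [hgrid]
    simp
  · obtain ⟨x₀, hx₀T, hmax⟩ := T.exists_max_image M.rank hT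
    have hnp : ∀ x ∈ T, ¬ M.parent (Sum.inr x₀) x := by
      intro x hx hp
      exact absurd (M.acyclic x₀ x hp) (not_lt.2 (hmax x hx))
    set T' := T.erase x₀ with hT'def
    set s : V → Finset ℕ := fun x => if x ∈ T then M.rangeV x else {base x} with hs
    set s' : V → Finset ℕ := fun x => if x ∈ T' then M.rangeV x else {base x} with hs'
    have hss' : ∀ x, x ≠ x₀ → s x = s' x := by
      intro x hx
      simp only [hs, hs', hT'def, Finset.mem_erase]
      by_cases hxT : x ∈ T <;> simp [hxT, hx]
    have hs'x₀ : s' x₀ = {base x₀} := by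
      simp [hs', hT'def]
    have hsx₀ : s x₀ = M.rangeV x₀ := by simp [hs, hx₀T]
    -- agreement of PV arguments after changing the x₀ coordinate
    have hagree : ∀ (x : V), x ∈ T → ∀ (v w : V → ℕ),
        (∀ y, y ≠ x₀ → v y = w y) → M.PV x (Sum.elim u v) = M.PV x (Sum.elim u w) := by
      intro x hx v w hvw
      apply M.PV_parents
      intro p hp
      cases p with
      | inl i => rfl
      | inr y =>
        by_cases hy : y = x₀
        · exact absurd (hy ▸ hp) (hnp x hx)
        · exact hvw y hy
    have key : ∑ v ∈ Fintype.piFinset s, ∏ x ∈ T, M.PV x (Sum.elim u v) (v x)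
        = ∑ p ∈ (Fintype.piFinset s') ×ˢ M.rangeV x₀,
            (∏ x ∈ T', M.PV x (Sum.elim u p.1) (p.1 x)) * M.PV x₀ (Sum.elim u p.1) p.2 := by
      apply Finset.sum_nbij' (i := fun v => (Function.update v x₀ (base x₀), v x₀))
        (j := fun p => Function.update p.1 x₀ p.2)
      · intro v hv
        rw [Finset.mem_product]
        rw [Fintype.mem_piFinset] at hv
        constructor
        · rw [Fintype.mem_piFinset]
          intro x
          show Function.update v x₀ (base x₀) x ∈ s' x
          by_cases hx : x = x₀
          · subst hx
            simp [hs'x₀, Function.update_self]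
          · rw [Function.update_of_ne hx, ← hss' x hx]
            exact hv x
        · have := hv x₀
          rwa [hsx₀] at this
      · intro p hp
        rw [Finset.mem_product] at hp
        rw [Fintype.mem_piFinset]
        intro x
        by_cases hx : x = x₀
        · subst hx
          rw [Function.update_self, hsx₀]
          exact hp.2
        · rw [Function.update_of_ne hx, hss' x hx]
          exact (Fintype.mem_piFinset.mp hp.1) x
      · intro v _
        simp only [Function.update_idem]
        exact Function.update_eq_self x₀ v
      · intro p hp
        rw [Finset.mem_product] at hp
        have hpx₀ : p.1 x₀ = base x₀ := by
          have := (Fintype.mem_piFinset.mp hp.1) x₀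
          rw [hs'x₀, Finset.mem_singleton] at this
          exact this
        have h1 : Function.update (Function.update p.1 x₀ p.2) x₀ (base x₀) = p.1 := by
          rw [Function.update_idem, ← hpx₀, Function.update_eq_self]
        have h2 : Function.update p.1 x₀ p.2 x₀ = p.2 := Function.update_self x₀ p.2 p.1
        exact Prod.ext h1 h2
      · intro v _
        show ∏ x ∈ T, M.PV x (Sum.elim u v) (v x)
            = (∏ x ∈ T', M.PV x (Sum.elim u (Function.update v x₀ (base x₀)))
                (Function.update v x₀ (base x₀) x))
              * M.PV x₀ (Sum.elim u (Function.update v x₀ (base x₀))) (v x₀)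
        set w := Function.update v x₀ (base x₀) with hw
        have hvw : ∀ y, y ≠ x₀ → v y = w y := by
          intro y hy
          rw [hw, Function.update_of_ne hy]
        rw [← Finset.mul_prod_erase T _ hx₀T, mul_comm]
        congr 1
        · apply Finset.prod_congr rfl
          intro x hx
          have hx' : x ∈ T.erase x₀ := hT'def ▸ hx
          have hxne : x ≠ x₀ := (Finset.mem_erase.mp hx').1
          rw [hagree x (Finset.mem_of_mem_erase hx') v w hvw,
            show w x = v x from (hvw x hxne).symm]
        · rw [hagree x₀ hx₀T v w hvw]
    rw [key, Finset.sum_product]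
    have hinner : ∀ w ∈ Fintype.piFinset s',
        ∑ a ∈ M.rangeV x₀, (∏ x ∈ T', M.PV x (Sum.elim u w) (w x))
            * M.PV x₀ (Sum.elim u w) a
          = ∏ x ∈ T', M.PV x (Sum.elim u w) (w x) := by
      intro w _
      rw [← Finset.mul_sum, hPV x₀ (Sum.elim u w), mul_one]
    rw [Finset.sum_congr rfl hinner]
    exact ih T' (Finset.erase_ssubset hx₀T) base

/-- equivalence of probabilistic and non-probabilistic
counterfactual semantics: for consistent models `M₁` (probabilistic) and `M₂`
(an NSEM) and a solution `(u,v)`, the probability of `φ` in the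
actualized-and-intervened probabilistic model `(M₁^{(u,v)})_{Y⃗←y⃗}` is `1` iff
every state `v'` with `(u,v')` a solution of `(M₂^{(u,v)})_{Y⃗←y⃗}` satisfies `φ`. -/
theorem stmt18 {U V : Type} [Fintype U] [Fintype V] [DecidableEq U] [DecidableEq V]
    (M₁ : PNSEM U V) (M₂ : NSEM U V)
    (hcons : M₁.Consistent M₂) (hprop : M₁.Proper)
    (u : U → ℕ) (v : V → ℕ) (hsol : M₂.Solution u v)
    (Ys : Set V) (ys : V → ℕ) (hy : ∀ x ∈ Ys, ys x ∈ M₂.rangeV x)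
    (φ : (V → ℕ) → Prop) :
    ((M₁.actualize u v).intervene Ys ys).prob φ = 1 ↔
      ∀ v' : V → ℕ, ((M₂.actualize u v).intervene Ys ys).Solution u v' → φ v' := by
  classical
  obtain ⟨hrU, hrV, hpar, hfc⟩ := hcons
  obtain ⟨hPUpos, hPUsum, hPVmem, hPVsum⟩ := hprop
  obtain ⟨hvc, hvs, hvf⟩ := hsol
  have hAPU : ∀ i a, ((M₁.actualize u v).intervene Ys ys).PU i a
      = if a = u i then 1 else 0 := fun i a => rfl
  have hAPV : ∀ x w a, ((M₁.actualize u v).intervene Ys ys).PV x w a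
      = if x ∈ Ys then (if a = ys x then 1 else 0)
        else if ∀ p, M₁.parent p x → w p = Sum.elim u v p then (if a = v x then 1 else 0)
        else M₁.PV x w a := by
    intro x w a
    simp only [PNSEM.intervene, PNSEM.actualize]
    congr!
  have hBf : ∀ x w, ((M₂.actualize u v).intervene Ys ys).f x w
      = if x ∈ Ys then {ys x}
        else if ∀ p, M₂.parent p x → w p = Sum.elim u v p then {v x}
        else M₂.f x w := by
    intro x w
    simp only [NSEM.intervene, NSEM.actualize]
    congr!
  have hArU : ∀ i, ((M₁.actualize u v).intervene Ys ys).rangeU i = M₁.rangeU i := fun i => rfl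
  have hArV : ∀ x, ((M₁.actualize u v).intervene Ys ys).rangeV x = M₁.rangeV x := fun x => rfl
  have hBrU : ∀ i, ((M₂.actualize u v).intervene Ys ys).rangeU i = M₂.rangeU i := fun i => rfl
  have hBrV : ∀ x, ((M₂.actualize u v).intervene Ys ys).rangeV x = M₂.rangeV x := fun x => rfl
  set A := (M₁.actualize u v).intervene Ys ys with hA
  set B := (M₂.actualize u v).intervene Ys ys with hB
  -- in-range facts
  have hyrange : ∀ x ∈ Ys, ys x ∈ M₁.rangeV x := by
    intro x hx; rw [hrV]; exact hy x hx
  have hvrange : ∀ x, v x ∈ M₁.rangeV x := by intro x; rw [hrV]; exact hvs x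
  have hurange : ∀ i, u i ∈ M₁.rangeU i := by intro i; rw [hrU]; exact hvc i
  -- PV of A is properly normalized
  have hAsum : ∀ x w, ∑ a ∈ M₁.rangeV x, A.PV x w a = 1 := by
    intro x w
    by_cases hx : x ∈ Ys
    · rw [Finset.sum_congr rfl (fun a _ => by rw [hAPV, if_pos hx]),
        Finset.sum_ite_eq' (M₁.rangeV x) (ys x) (fun _ => (1 : ℝ)), if_pos (hyrange x hx)]
    · by_cases hm : ∀ p, M₁.parent p x → w p = Sum.elim u v p
      · rw [Finset.sum_congr rfl (fun a _ => by rw [hAPV, if_neg hx, if_pos hm]),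
          Finset.sum_ite_eq' (M₁.rangeV x) (v x) (fun _ => (1 : ℝ)), if_pos (hvrange x)]
      · rw [Finset.sum_congr rfl (fun a _ => by rw [hAPV, if_neg hx, if_neg hm])]
        exact hPVsum x w
  -- positивity characterizations
  have hApvpos : ∀ x w a, 0 < A.PV x w a ↔ a ∈ B.f x w := by
    intro x w a
    rw [hAPV, hBf, ← hpar]
    by_cases hx : x ∈ Ys
    · rw [if_pos hx, if_pos hx, Finset.mem_singleton]
      by_cases ha : a = ys x <;> simp [ha]
    · rw [if_neg hx, if_neg hx]
      by_cases hm : ∀ p, M₁.parent p x → w p = Sum.elim u v p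
      · rw [if_pos hm, if_pos hm, Finset.mem_singleton]
        by_cases ha : a = v x <;> simp [ha]
      · rw [if_neg hm, if_neg hm]
        exact hfc x w a
  have hApupos : ∀ i a, 0 < A.PU i a ↔ a = u i := by
    intro i a
    rw [hAPU]
    by_cases ha : a = u i <;> simp [ha]
  have hApv_nonneg : ∀ x w a, 0 ≤ A.PV x w a := A.PV_nonneg
  have hApu_nonneg : ∀ i a, 0 ≤ A.PU i a := A.PU_nonneg
  have hjoint_nonneg : ∀ u' v', 0 ≤ A.joint u' v' := fun u' v' =>
    mul_nonneg (Finset.prod_nonneg fun i _ => hApu_nonneg i (u' i))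
      (Finset.prod_nonneg fun x _ => hApv_nonneg x _ (v' x))
  have hjoint_pos : ∀ u' v', 0 < A.joint u' v' ↔
      (∀ i, u' i = u i) ∧ ∀ x, v' x ∈ B.f x (Sum.elim u' v') := by
    intro u' v'
    unfold PNSEM.joint
    rw [mul_pos_iff' (Finset.prod_nonneg fun i _ => hApu_nonneg i (u' i))
        (Finset.prod_nonneg fun x _ => hApv_nonneg x _ (v' x)),
      prod_pos_iff_forall _ _ (fun i _ => hApu_nonneg i (u' i)),
      prod_pos_iff_forall _ _ (fun x _ => hApv_nonneg x _ (v' x))]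
    constructor
    · rintro ⟨h1, h2⟩
      exact ⟨fun i => (hApupos i (u' i)).mp (h1 i (Finset.mem_univ i)),
        fun x => (hApvpos x _ (v' x)).mp (h2 x (Finset.mem_univ x))⟩
    · rintro ⟨h1, h2⟩
      exact ⟨fun i _ => (hApupos i (u' i)).mpr (h1 i),
        fun x _ => (hApvpos x _ (v' x)).mpr (h2 x)⟩
  -- total mass is 1
  have hVone : ∀ u' : U → ℕ, ∑ v' ∈ Fintype.piFinset (fun x => A.rangeV x),
      ∏ x, A.PV x (Sum.elim u' v') (v' x) = 1 := by
    intro u'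
    have h := pnsem_sum_prod_eq_one A
      (fun x w => by rw [hArV] at *; exact hAsum x w) u' Finset.univ v
    simpa using h
  have hUone : ∑ u' ∈ Fintype.piFinset (fun i => A.rangeU i), ∏ i, A.PU i (u' i) = 1 := by
    rw [← Finset.prod_univ_sum]
    have h1 : ∀ i ∈ Finset.univ, (∑ a ∈ A.rangeU i, A.PU i a) = (1 : ℝ) := by
      intro i _
      rw [show A.rangeU i = M₁.rangeU i from hArU i,
        Finset.sum_congr rfl (fun a _ => hAPU i a),
        Finset.sum_ite_eq' (M₁.rangeU i) (u i) (fun _ => (1 : ℝ)), if_pos (hurange i)]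
    rw [Finset.prod_congr rfl h1, Finset.prod_const_one]
  have hTot : ∑ u' ∈ Fintype.piFinset (fun i => A.rangeU i),
      ∑ v' ∈ Fintype.piFinset (fun x => A.rangeV x), A.joint u' v' = 1 := by
    have h1 : ∀ u' ∈ Fintype.piFinset (fun i => A.rangeU i),
        ∑ v' ∈ Fintype.piFinset (fun x => A.rangeV x), A.joint u' v'
          = ∏ i, A.PU i (u' i) := by
      intro u' _
      unfold PNSEM.joint
      rw [← Finset.mul_sum, hVone u', mul_one]
    rw [Finset.sum_congr rfl h1]
    exact hUone
  -- split prob into φ-part and ¬φ-part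
  have hsplit : A.prob φ
      + ∑ u' ∈ Fintype.piFinset (fun i => A.rangeU i),
          ∑ v' ∈ Fintype.piFinset (fun x => A.rangeV x),
            (if φ v' then 0 else A.joint u' v') = 1 := by
    unfold PNSEM.prob
    rw [← hTot, ← Finset.sum_add_distrib]
    apply Finset.sum_congr rfl
    intro u' _
    rw [← Finset.sum_add_distrib]
    apply Finset.sum_congr rfl
    intro v' _
    by_cases hφ : φ v' <;> simp [hφ]
  have hterm_nonneg : ∀ (u' : U → ℕ) (v' : V → ℕ),
      0 ≤ (if φ v' then 0 else A.joint u' v') := by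
    intro u' v'
    by_cases hφ : φ v' <;> simp [hφ, hjoint_nonneg u' v']
  have hprob_iff : A.prob φ = 1 ↔
      ∀ u' ∈ Fintype.piFinset (fun i => A.rangeU i),
        ∀ v' ∈ Fintype.piFinset (fun x => A.rangeV x),
          ¬ φ v' → A.joint u' v' = 0 := by
    constructor
    · intro h1 u' hu' v' hv' hφ
      have hS : ∑ u' ∈ Fintype.piFinset (fun i => A.rangeU i),
          ∑ v' ∈ Fintype.piFinset (fun x => A.rangeV x),
            (if φ v' then 0 else A.joint u' v') = 0 := by linarith
      have h2 := (Finset.sum_eq_zero_iff_of_nonneg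
        (fun u' _ => Finset.sum_nonneg (fun v' _ => hterm_nonneg u' v'))).mp hS u' hu'
      have h3 := (Finset.sum_eq_zero_iff_of_nonneg
        (fun v' _ => hterm_nonneg u' v')).mp h2 v' hv'
      rwa [if_neg hφ] at h3
    · intro h
      have hS : ∑ u' ∈ Fintype.piFinset (fun i => A.rangeU i),
          ∑ v' ∈ Fintype.piFinset (fun x => A.rangeV x),
            (if φ v' then 0 else A.joint u' v') = 0 :=
        Finset.sum_eq_zero fun u' hu' => Finset.sum_eq_zero fun v' hv' => by
          by_cases hφ : φ v'
          · simp [hφ]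
          · simp [hφ, h u' hu' v' hv' hφ]
      linarith
  rw [hprob_iff]
  constructor
  · intro h v' hsolB
    obtain ⟨hc', hs', hf'⟩ := hsolB
    have huA : u ∈ Fintype.piFinset (fun i => A.rangeU i) :=
      Fintype.mem_piFinset.mpr fun i => by rw [hArU i]; exact hurange i
    have hvA : v' ∈ Fintype.piFinset (fun x => A.rangeV x) :=
      Fintype.mem_piFinset.mpr fun x => by rw [hArV x, hrV]; exact hs' x
    by_contra hφ
    have h0 := h u huA v' hvA hφ
    have hpos := (hjoint_pos u v').mpr ⟨fun i => rfl, hf'⟩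
    rw [h0] at hpos
    exact lt_irrefl 0 hpos
  · intro h u' hu' v' hv' hφ
    by_contra hne
    have hpos : 0 < A.joint u' v' := lt_of_le_of_ne (hjoint_nonneg u' v') (Ne.symm hne)
    obtain ⟨hueq, hfB⟩ := (hjoint_pos u' v').mp hpos
    have hu'u : u' = u := funext hueq
    subst hu'u
    apply hφ
    apply h v'
    refine ⟨fun i => ?_, fun x => ?_, hfB⟩
    · have hm := Fintype.mem_piFinset.mp hu' i
      rw [hArU i, hrU] at hm
      exact hm
    · have hm := Fintype.mem_piFinset.mp hv' x
      rw [hArV x, hrV] at hm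
      exact hm
end

section
/- Markov marginalization: let M be a probabilistic NSEM over a DAG in which no two endogenous variables share an exogenous parent and exogenous variables have no parents. Then the marginal distribution of the joint P_M over the endogenous variables V factorizes as P_M(V) = ∏_{X ∈ V} P'_X(X | Pa_X ∩ V), where P'_X(x | pa) = Σ_w P_X(x | pa, w) ∏_i P_{W_i}(w_i) marginalizes over X's exogenous parents W. -/
open scoped Classical

private lemma sum_prod_w {U : Type} [Fintype U] [DecidableEq U]
    (R : U → Finset ℕ) (w : U → ℕ → ℝ) (hw : ∀ i, ∑ a ∈ R i, w i a = 1) :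
    ∑ u ∈ Fintype.piFinset R, ∏ i, w i (u i) = 1 := by
  rw [← Finset.prod_univ_sum]
  simp [hw]

private lemma split_indep {U : Type} [Fintype U] [DecidableEq U]
    (R : U → Finset ℕ) (w : U → ℕ → ℝ) (hw : ∀ i, ∑ a ∈ R i, w i a = 1)
    (A : Set U) (g h : (U → ℕ) → ℝ)
    (hg : ∀ u u', (∀ i ∈ A, u i = u' i) → g u = g u')
    (hh : ∀ u u', (∀ i ∉ A, u i = u' i) → h u = h u') :
    (∑ u ∈ Fintype.piFinset R, (∏ i, w i (u i)) * g u)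
        * (∑ u ∈ Fintype.piFinset R, (∏ i, w i (u i)) * h u)
      = ∑ u ∈ Fintype.piFinset R, (∏ i, w i (u i)) * (g u * h u) := by
  classical
  set m : (U → ℕ) → (U → ℕ) → (U → ℕ) := fun u u' i => if i ∈ A then u i else u' i with hm
  have hmem : ∀ u u', u ∈ Fintype.piFinset R → u' ∈ Fintype.piFinset R →
      m u u' ∈ Fintype.piFinset R := by
    intro u u' hu hu'
    rw [Fintype.mem_piFinset] at hu hu' ⊢
    intro i
    by_cases hi : i ∈ A <;> simp [hm, hi, hu i, hu' i]
  have key : ∑ p ∈ Fintype.piFinset R ×ˢ Fintype.piFinset R,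
        ((∏ i, w i (p.1 i)) * g p.1) * ((∏ i, w i (p.2 i)) * h p.2)
      = ∑ p ∈ Fintype.piFinset R ×ˢ Fintype.piFinset R,
        ((∏ i, w i (p.1 i)) * (g p.1 * h p.1)) * (∏ i, w i (p.2 i)) := by
    refine Finset.sum_nbij' (fun p => (m p.1 p.2, m p.2 p.1))
      (fun p => (m p.1 p.2, m p.2 p.1)) ?_ ?_ ?_ ?_ ?_
    · rintro ⟨u, u'⟩ hp
      simp only [Finset.mem_product] at hp ⊢
      exact ⟨hmem _ _ hp.1 hp.2, hmem _ _ hp.2 hp.1⟩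
    · rintro ⟨u, u'⟩ hp
      simp only [Finset.mem_product] at hp ⊢
      exact ⟨hmem _ _ hp.1 hp.2, hmem _ _ hp.2 hp.1⟩
    · rintro ⟨u, u'⟩ _
      simp only [Prod.mk.injEq]
      constructor <;> (funext i; by_cases hi : i ∈ A <;> simp [hm, hi])
    · rintro ⟨u, u'⟩ _
      simp only [Prod.mk.injEq]
      constructor <;> (funext i; by_cases hi : i ∈ A <;> simp [hm, hi])
    · rintro ⟨u, u'⟩ _
      have hgm2 : g (m u u') = g u :=
        (hg u (m u u') (by intro i hi; simp [hm, hi])).symm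
      have hhm2 : h (m u u') = h u' :=
        (hh u' (m u u') (by intro i hi; simp [hm, hi])).symm
      have hprod : (∏ i, w i (u i)) * (∏ i, w i (u' i))
          = (∏ i, w i (m u u' i)) * (∏ i, w i (m u' u i)) := by
        rw [← Finset.prod_mul_distrib, ← Finset.prod_mul_distrib]
        refine Finset.prod_congr rfl fun i _ => ?_
        by_cases hi : i ∈ A <;> simp [hm, hi, mul_comm]
      show ((∏ i, w i (u i)) * g u) * ((∏ i, w i (u' i)) * h u')
          = ((∏ i, w i (m u u' i)) * (g (m u u') * h (m u u'))) * (∏ i, w i (m u' u i))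
      rw [hgm2, hhm2]
      calc ((∏ i, w i (u i)) * g u) * ((∏ i, w i (u' i)) * h u')
          = ((∏ i, w i (u i)) * (∏ i, w i (u' i))) * (g u * h u') := by ring
        _ = ((∏ i, w i (m u u' i)) * (∏ i, w i (m u' u i))) * (g u * h u') := by rw [hprod]
        _ = ((∏ i, w i (m u u' i)) * (g u * h u')) * (∏ i, w i (m u' u i)) := by ring
  rw [Finset.sum_mul_sum, ← Finset.sum_product', key, Finset.sum_product]
  simp only [← Finset.mul_sum, sum_prod_w R w hw, mul_one]

private lemma factorize {U V : Type} [Fintype U] [DecidableEq U]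
    (R : U → Finset ℕ) (w : U → ℕ → ℝ) (hw : ∀ i, ∑ a ∈ R i, w i a = 1)
    (S : V → Set U) (hdisj : ∀ x x', x ≠ x' → ∀ i, i ∈ S x → i ∉ S x')
    (f : V → (U → ℕ) → ℝ)
    (hf : ∀ x u u', (∀ i ∈ S x, u i = u' i) → f x u = f x u')
    (T : Finset V) :
    ∑ u ∈ Fintype.piFinset R, (∏ i, w i (u i)) * (∏ x ∈ T, f x u)
      = ∏ x ∈ T, ∑ u ∈ Fintype.piFinset R, (∏ i, w i (u i)) * f x u := by
  classical
  induction T using Finset.cons_induction with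
  | empty => simpa using sum_prod_w R w hw
  | cons x T hx ih =>
    have hh' : ∀ u u', (∀ i ∉ S x, u i = u' i) →
        (∏ y ∈ T, f y u) = ∏ y ∈ T, f y u' := by
      intro u u' hag
      refine Finset.prod_congr rfl fun y hy => ?_
      refine hf y u u' fun i hi => hag i ?_
      exact hdisj y x (fun hxy => hx (hxy ▸ hy)) i hi
    rw [Finset.prod_cons, ← ih,
      split_indep R w hw (S x) (f x) (fun u => ∏ y ∈ T, f y u) (hf x) hh']
    exact Finset.sum_congr rfl fun u _ => by rw [Finset.prod_cons]

/-- Markov marginalization: if no two endogenous variables share an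
exogenous parent (exogenous variables are roots by construction), the marginal of
the joint `P_M` over the endogenous variables factorizes as
`P_M(V) = ∏_{X ∈ V} P'_X(X | Pa_X ∩ V)`, where `P'_X` marginalizes `P_X` over the
exogenous parents of `X` weighted by their priors. -/
theorem stmt19 {U V : Type} [Fintype U] [Fintype V] [DecidableEq U]
    (M : PNSEM U V)
    (hshare : ∀ (i : U) (x x' : V),
      M.parent (Sum.inl i) x → M.parent (Sum.inl i) x' → x = x')
    (hPUsum : ∀ i, ∑ a ∈ M.rangeU i, M.PU i a = 1)
    (hPUsupp : ∀ i a, 0 < M.PU i a ↔ a ∈ M.rangeU i)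
    (v : V → ℕ) :
    ∑ u ∈ Fintype.piFinset (fun i => M.rangeU i), M.joint u v
      = ∏ x : V, ∑ u ∈ Fintype.piFinset (fun i => M.rangeU i),
          (∏ i, M.PU i (u i)) * M.PV x (Sum.elim u v) (v x) := by
  classical
  have h := factorize M.rangeU M.PU hPUsum (fun x => {i | M.parent (Sum.inl i) x})
    (fun x x' hne i hix hix' => hne (hshare i x x' hix hix'))
    (fun x u => M.PV x (Sum.elim u v) (v x))
    (fun x u u' hag => by
      have h2 : M.PV x (Sum.elim u v) = M.PV x (Sum.elim u' v) := by
        refine M.PV_parents x _ _ fun p hp => ?_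
        cases p with
        | inl i => exact hag i hp
        | inr y => rfl
      exact congrFun h2 (v x))
    Finset.univ
  simpa [PNSEM.joint] using h
end
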